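/- arXiv:2604.25822 — 3 statements merged into one kernel-verified Lean document; each statement's English description precedes it below -/
import Mathlib

section
/- Let p be a prime, k ≥ 1, and γ a complex primitive p^k-th root of unity. Let M be a complex matrix all of whose entries lie in {0, 1, γ, γ^2, ..., γ^(p^k−1)}. Define M|_{γ=1} to be the matrix over 𝔽_p with entry 0 where M has entry 0 and entry 1 otherwise. Then rank_ℂ(M) ≥ rank_{𝔽_p}(M|_{γ=1}). -/
/-!
Write `M = N(γ)` for a matrix `N` over `ℤ[X]` whose entries are `0` or monomials `X ^ e`; then
`M|_{γ=1} = N(1) mod p`. A polynomial vanishing at `γ` is divisible by `Φ_{p^k}`, and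
`Φ_{p^k}(1) = p`, so every minor of `N` vanishing at `γ` vanishes at `1` mod `p`. Since the rank is
the size of a largest nonvanishing minor, it can only drop from `N(γ)` to `N(1) mod p`.
-/

open Polynomial

namespace Matrix

variable {K : Type*} [Field K] {m n : Type*} [Fintype n]

theorem exists_linearIndependent_cols_of_le_rank (A : Matrix m n K) {r : ℕ} (hr : r ≤ A.rank) :
    ∃ g : Fin r → n, LinearIndependent K (A.col ∘ g) := by
  obtain ⟨κ, a, ha, hspan, hli⟩ := exists_linearIndependent' K A.col
  have : Finite κ := Finite.of_injective a ha
  cases nonempty_fintype κ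
  have hcard : A.rank = Fintype.card κ := by
    rw [rank_eq_finrank_span_cols, ← hspan, finrank_span_eq_card hli]
  let e : Fin r ↪ κ :=
    (Fin.castLEEmb (hr.trans hcard.le)).trans (Fintype.equivFin κ).symm.toEmbedding
  exact ⟨a ∘ e, hli.comp e e.injective⟩

theorem exists_submatrix_det_ne_zero [Fintype m] (A : Matrix m n K) :
    ∃ (f : Fin A.rank → m) (g : Fin A.rank → n), (A.submatrix f g).det ≠ 0 := by
  obtain ⟨g, hg⟩ := A.exists_linearIndependent_cols_of_le_rank le_rfl
  have hrank : (A.submatrix id g)ᵀ.rank = A.rank := by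
    simpa using LinearIndependent.rank_matrix (M := (A.submatrix id g)ᵀ) hg
  obtain ⟨f, hf⟩ := (A.submatrix id g)ᵀ.exists_linearIndependent_cols_of_le_rank hrank.ge
  refine ⟨f, g, ?_⟩
  rw [← isUnit_iff_ne_zero, ← isUnit_iff_isUnit_det, ← linearIndependent_rows_iff_isUnit]
  exact hf

theorem rank_map_le_of_ker_le [Fintype m] {R L : Type*} [CommRing R] [Field L] (N : Matrix m n R)
    {φ : R →+* K} {ψ : R →+* L} (h : RingHom.ker φ ≤ RingHom.ker ψ) :
    (N.map ψ).rank ≤ (N.map φ).rank := by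
  obtain ⟨f, g, hψ⟩ := (N.map ψ).exists_submatrix_det_ne_zero
  have hφ : ((N.map φ).submatrix f g).det ≠ 0 := by
    intro hφ
    have hker : (N.submatrix f g).det ∈ RingHom.ker ψ :=
      h (by rwa [RingHom.mem_ker, RingHom.map_det])
    rw [RingHom.mem_ker, RingHom.map_det] at hker
    exact hψ hker
  calc (N.map ψ).rank = ((N.map φ).submatrix f g).rank := by
        rw [rank_of_det_ne_zero hφ, Fintype.card_fin]
    _ ≤ (N.map φ).rank := rank_submatrix_le _ _ _

end Matrix

theorem IsPrimitiveRoot.ker_aeval_le_ker_intCast_comp_eval_one {K : Type*} [Field K] [CharZero K]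
    {p k : ℕ} [Fact p.Prime] (hk : k ≠ 0) {γ : K} (hγ : IsPrimitiveRoot γ (p ^ k)) :
    RingHom.ker (aeval γ).toRingHom ≤
      RingHom.ker ((Int.castRingHom (ZMod p)).comp (evalRingHom 1)) := by
  intro q hq
  have hpk : 0 < p ^ k := pow_pos (Fact.out : p.Prime).pos k
  obtain ⟨c, rfl⟩ : cyclotomic (p ^ k) ℤ ∣ q := by
    rw [cyclotomic_eq_minpoly hγ hpk]
    exact minpoly.isIntegrallyClosed_dvd (hγ.isIntegral hpk) hq
  obtain ⟨k, rfl⟩ := Nat.exists_eq_succ_of_ne_zero hk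
  simp [eval_one_cyclotomic_prime_pow]

theorem exists_int_polynomial_aeval_eq_of_eq_zero_or_eq_pow {K : Type*} [CommRing K]
    [NoZeroDivisors K] [DecidableEq K] {γ z : K} (hγ : γ ≠ 0) (hz : z = 0 ∨ ∃ e : ℕ, z = γ ^ e) :
    ∃ q : ℤ[X], aeval γ q = z ∧ q.eval 1 = if z = 0 then 0 else 1 := by
  rcases hz with rfl | ⟨e, rfl⟩
  · exact ⟨0, by simp⟩
  · exact ⟨X ^ e, by simp [pow_ne_zero e hγ]⟩

theorem stmt1 (p k m n : ℕ) (hp : p.Prime) (hk : 1 ≤ k) (γ : ℂ)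
    (hγ : IsPrimitiveRoot γ (p ^ k))
    (M : Matrix (Fin m) (Fin n) ℂ)
    (hM : ∀ i j, M i j = 0 ∨ ∃ e < p ^ k, M i j = γ ^ e)
    (M' : Matrix (Fin m) (Fin n) (ZMod p))
    (hM' : ∀ i j, M' i j = if M i j = 0 then 0 else 1) :
    M'.rank ≤ M.rank := by
  have : Fact p.Prime := ⟨hp⟩
  have hγ0 : γ ≠ 0 := hγ.ne_zero (pow_pos hp.pos k).ne'
  choose q hqγ hq1 using fun i j => exists_int_polynomial_aeval_eq_of_eq_zero_or_eq_pow hγ0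
    ((hM i j).imp_right fun ⟨e, _, he⟩ => ⟨e, he⟩)
  have hNγ : (Matrix.of q).map (aeval γ).toRingHom = M := by
    ext i j
    exact hqγ i j
  have hN1 : (Matrix.of q).map ((Int.castRingHom (ZMod p)).comp (evalRingHom 1)) = M' := by
    ext i j
    simp [hq1, hM', apply_ite]
  rw [← hNγ, ← hN1]
  exact (Matrix.of q).rank_map_le_of_ker_le (hγ.ker_aeval_le_ker_intCast_comp_eval_one (by omega))
end

section
/- Let R = ℤ/p^kℤ and suppose S ⊆ R^n is a Kakeya set, i.e., for every b ∈ R^n with at least one unit coordinate there exists u_b ∈ R^n such that the line {u_b + t·b : t ∈ R} is contained in S. Let A be the 0/1 matrix over 𝔽_p whose rows are indexed by pairs (b, λ) with b ranging over representatives of directions (vectors with a unit coordinate up to unit scaling) and λ ∈ R, whose columns are indexed by R^n, and whose ((b,λ), y) entry is 1 iff ⟨b,y⟩ = λ. Then rank_{𝔽_p}(A) ≤ |S|. -/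
/-!
Lift `A` to characteristic zero. Let `ω` be a root of the `p^k`-th cyclotomic polynomial in
`ℤ[ω] = ℤ[X]/(Φ_{p^k})` and `ψ t = ω ^ t`, a primitive additive character of `ZMod (p^k)`.
Since `Φ_{p^k}(1) = p`, sending `ω ↦ 1` defines a reduction `θ : ℤ[ω] → 𝔽_p`, and the matrix
`X` with entries `ψ ⟨u_b, z⟩ · [⟨b, z⟩ = λ]` reduces to `A`. A right inverse of a full-row-rank
reduction lifts with determinant `≡ 1`, so `rank A ≤ rank X` over `ℚ(ω)`. Orthogonality of `ψ`
gives `p^k · X_{(b,λ)} = ∑_t ψ(-tλ) χ_{u_b + t b}` with `χ_s z = ψ ⟨s, z⟩`, and every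
`u_b + t b` lies in `S`: all rows of `X` lie in the span of the `|S|` characters `χ_s`.
-/

open scoped Classical

namespace Matrix

variable {m n ι R F K : Type*} [CommRing R] [Field F] [Field K]

theorem exists_mul_eq_one_of_linearIndependent_row [Fintype ι] [DecidableEq ι] [Fintype n]
    {M : Matrix ι n F} (h : LinearIndependent F M.row) : ∃ B : Matrix n ι F, M * B = 1 := by
  rw [← mulVec_surjective_iff_exists_right_inverse, ← coe_mulVecLin, ← LinearMap.range_eq_top]
  apply Submodule.eq_top_of_finrank_eq
  rw [← rank, h.rank_matrix, Module.finrank_fintype_fun_eq_card]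

/-- A right inverse of `M.map θ` lifts to some `B`, and `det (M * B)` reduces to `1`. -/
theorem linearIndependent_row_map_of_linearIndependent_row_map [Fintype ι] [DecidableEq ι]
    [Fintype n] {θ : R →+* F} (hθ : Function.Surjective θ) {φ : R →+* K}
    (hφ : Function.Injective φ) {M : Matrix ι n R} (h : LinearIndependent F (M.map θ).row) :
    LinearIndependent K (M.map φ).row := by
  obtain ⟨B, hB⟩ := exists_mul_eq_one_of_linearIndependent_row h
  set B' := B.map (Function.surjInv hθ)
  have hB' : B'.map θ = B := by ext; simp [B', Function.surjInv_eq hθ]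
  have hdet : θ (M * B').det = 1 := by
    rw [RingHom.map_det, RingHom.mapMatrix_apply, Matrix.map_mul, hB', hB, det_one]
  have hdetφ : (M.map φ * B'.map φ).det ≠ 0 := by
    rw [← Matrix.map_mul, ← RingHom.mapMatrix_apply, ← RingHom.map_det]
    exact (map_ne_zero_iff φ hφ).mpr fun h0 => by simp [h0] at hdet
  rw [← vecMul_injective_iff]
  refine Function.Injective.of_comp (f := fun v => v ᵥ* B'.map φ) ?_
  simp only [Function.comp_def, vecMul_vecMul]
  exact vecMul_injective_iff.mpr (linearIndependent_rows_of_det_ne_zero hdetφ)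

theorem rank_map_le_rank_map [Finite m] [Fintype n] {θ : R →+* F}
    (hθ : Function.Surjective θ) {φ : R →+* K} (hφ : Function.Injective φ) (M : Matrix m n R) :
    (M.map θ).rank ≤ (M.map φ).rank := by
  obtain ⟨κ, a, ha, hspan, hli⟩ := exists_linearIndependent' F (M.map θ).row
  have : Finite κ := .of_injective a ha
  have := Fintype.ofFinite κ
  have hrank : (M.map θ).rank = Fintype.card κ := by
    rw [rank_eq_finrank_span_row, ← hspan, finrank_span_eq_card hli]
  have hsub : LinearIndependent K ((M.submatrix a id).map φ).row :=
    linearIndependent_row_map_of_linearIndependent_row_map hθ hφ hli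
  calc (M.map θ).rank = ((M.submatrix a id).map φ).rank := by rw [hrank, hsub.rank_matrix]
    _ ≤ (M.map φ).rank := by rw [← submatrix_map]; exact rank_submatrix_le _ _ _

end Matrix

open Matrix

section TwistedIncidence

variable {m ι Λ R : Type*} [Fintype ι] [CommRing Λ] [DecidableEq Λ] [CommRing R]

def twistedIncidence (ψ : AddChar Λ R) (u b : m → ι → Λ) (c : m → Λ) :
    Matrix m (ι → Λ) R :=
  of fun r z => ψ (u r ⬝ᵥ z) * if b r ⬝ᵥ z = c r then 1 else 0

variable (u b : m → ι → Λ) (c : m → Λ)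

theorem twistedIncidence_map {R' : Type*} [CommRing R'] (ψ : AddChar Λ R) (f : R →+* R') :
    (twistedIncidence ψ u b c).map f =
      twistedIncidence ((f : R →* R').compAddChar ψ) u b c := by
  ext r z
  simp [twistedIncidence, apply_ite f]

theorem twistedIncidence_one :
    twistedIncidence (1 : AddChar Λ R) u b c =
      of fun r z => if b r ⬝ᵥ z = c r then 1 else 0 := by
  ext r z
  simp [twistedIncidence]

variable [Fintype Λ]

theorem card_smul_twistedIncidence_row [IsDomain R] {ψ : AddChar Λ R} (hψ : ψ.IsPrimitive)
    (r : m) :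
    (Fintype.card Λ : R) • twistedIncidence ψ u b c r =
      ∑ t, ψ (-(t * c r)) • fun z => ψ ((u r + t • b r) ⬝ᵥ z) := by
  ext z
  have hsum := AddChar.sum_mulShift (b r ⬝ᵥ z - c r) hψ
  simp only [sub_eq_zero] at hsum
  simp only [twistedIncidence, of_apply, Pi.smul_apply, smul_eq_mul, Finset.sum_apply,
    add_dotProduct, smul_dotProduct]
  calc _ = ψ (u r ⬝ᵥ z) * ∑ t, ψ (t * (b r ⬝ᵥ z - c r)) := by
        rw [hsum]
        split_ifs <;> ring
    _ = _ := by
        rw [Finset.mul_sum]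
        refine Finset.sum_congr rfl fun t _ => ?_
        rw [← AddChar.map_add_eq_mul, ← AddChar.map_add_eq_mul]
        congr 1
        ring

theorem rank_twistedIncidence_le_card [DecidableEq ι] [Finite m] {K : Type*} [Field K]
    {ψ : AddChar Λ K} (hψ : ψ.IsPrimitive) (hcard : (Fintype.card Λ : K) ≠ 0)
    (S : Finset (ι → Λ)) (hline : ∀ r (t : Λ), u r + t • b r ∈ S) :
    (twistedIncidence ψ u b c).rank ≤ S.card := by
  set χ : (ι → Λ) → (ι → Λ) → K := fun s z => ψ (s ⬝ᵥ z)
  set W := Submodule.span K (S.image χ : Set ((ι → Λ) → K))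
  have hrow : ∀ r, twistedIncidence ψ u b c r ∈ W := by
    intro r
    rw [← Submodule.smul_mem_iff _ hcard, card_smul_twistedIncidence_row u b c hψ]
    refine Submodule.sum_mem _ fun t _ => Submodule.smul_mem _ _ (Submodule.subset_span ?_)
    exact Finset.mem_coe.mpr (Finset.mem_image_of_mem χ (hline r t))
  have h1 : (twistedIncidence ψ u b c).rank ≤ Module.finrank K W := by
    rw [rank_eq_finrank_span_row]
    exact Submodule.finrank_mono (Submodule.span_le.mpr (Set.range_subset_iff.mpr hrow))
  exact h1.trans ((finrank_span_finset_le_card _).trans Finset.card_image_le)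

theorem rank_incidence_le_card [DecidableEq ι] [Finite m] {F K : Type*} [Field F] [Field K]
    {ψ : AddChar Λ R} (hψ : ψ.IsPrimitive) {θ : R →+* F} (hθ : Function.Surjective θ)
    (hθψ : (θ : R →* F).compAddChar ψ = 1) {φ : R →+* K} (hφ : Function.Injective φ)
    (hcard : (Fintype.card Λ : K) ≠ 0) (S : Finset (ι → Λ))
    (hline : ∀ r (t : Λ), u r + t • b r ∈ S) :
    (of fun r z => if b r ⬝ᵥ z = c r then (1 : F) else 0).rank ≤ S.card := by
  rw [← twistedIncidence_one, ← hθψ, ← twistedIncidence_map]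
  refine (rank_map_le_rank_map hθ hφ _).trans ?_
  rw [twistedIncidence_map]
  exact rank_twistedIncidence_le_card u b c (hψ.compMulHom_of_isPrimitive hφ) hcard S hline

end TwistedIncidence

open Polynomial

namespace AdjoinRoot

variable (N : ℕ) [NeZero N]

instance : IsDomain (AdjoinRoot (cyclotomic N ℤ)) :=
  isDomain_of_prime (cyclotomic.irreducible (NeZero.pos N)).prime

theorem natCast_ne_zero_of_cyclotomic : (N : AdjoinRoot (cyclotomic N ℤ)) ≠ 0 := by
  rw [← map_natCast (of (cyclotomic N ℤ)), map_ne_zero_iff _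
    (of.injective_of_degree_ne_zero (degree_cyclotomic_pos N ℤ (NeZero.pos N)).ne')]
  exact NeZero.ne _

theorem isPrimitiveRoot_root_cyclotomic : IsPrimitiveRoot (root (cyclotomic N ℤ)) N := by
  have := NeZero.mk (natCast_ne_zero_of_cyclotomic N)
  rw [← isRoot_cyclotomic_iff, ← map_cyclotomic_int N (AdjoinRoot (cyclotomic N ℤ)), IsRoot,
    eval_map, Subsingleton.elim (Int.castRingHom _) (of _)]
  exact eval₂_root _

theorem exists_ringHom_zmod_root_cyclotomic_eq_one (p k : ℕ) [Fact p.Prime] (hk : 0 < k) :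
    ∃ θ : AdjoinRoot (cyclotomic (p ^ k) ℤ) →+* ZMod p, θ (root _) = 1 := by
  obtain ⟨k, rfl⟩ := Nat.exists_eq_add_one_of_ne_zero hk.ne'
  have h : eval₂ (Int.castRingHom (ZMod p)) 1 (cyclotomic (p ^ (k + 1)) ℤ) = 0 := by
    rw [eval₂_one_cyclotomic_prime_pow, ZMod.natCast_self]
  exact ⟨lift _ _ h, lift_root h⟩

end AdjoinRoot

theorem stmt4 (p k n : ℕ) [hp : Fact p.Prime] (hk : 1 ≤ k)
    (S : Finset (Fin n → ZMod (p ^ k)))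
    (hS : ∀ b : Fin n → ZMod (p ^ k), (∃ i, IsUnit (b i)) →
      ∃ u, ∀ t : ZMod (p ^ k), u + t • b ∈ S)
    (A : Matrix ({b : Fin n → ZMod (p ^ k) // ∃ i, IsUnit (b i)} × ZMod (p ^ k))
      (Fin n → ZMod (p ^ k)) (ZMod p))
    (hA : ∀ r y, A r y =
      if ∑ i, (r.1 : Fin n → ZMod (p ^ k)) i * y i = r.2 then 1 else 0) :
    A.rank ≤ S.card := by
  set R := AdjoinRoot (cyclotomic (p ^ k) ℤ)
  obtain ⟨θ, hθ⟩ := AdjoinRoot.exists_ringHom_zmod_root_cyclotomic_eq_one p k hk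
  have hω := AdjoinRoot.isPrimitiveRoot_root_cyclotomic (p ^ k)
  have hθψ : (θ : R →* ZMod p).compAddChar (AddChar.zmodChar _ hω.pow_eq_one) = 1 := by
    ext a
    simp [AddChar.zmodChar_apply, hθ]
  have hφ := IsFractionRing.injective R (FractionRing R)
  have hcard : (Fintype.card (ZMod (p ^ k)) : FractionRing R) ≠ 0 := by
    rw [ZMod.card]
    exact (hω.map_of_injective hφ).neZero'.ne
  choose u hu using fun r : {b : Fin n → ZMod (p ^ k) // ∃ i, IsUnit (b i)} × ZMod (p ^ k) =>
    hS r.1 r.1.2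
  convert rank_incidence_le_card u (fun r => r.1) Prod.snd
    (AddChar.zmodChar_primitive_of_primitive_root _ hω) (ZMod.ringHom_surjective θ) hθψ hφ hcard
    S hu
  ext r y
  rw [hA]
  rfl
end

section
/- Let p be prime, k, n ≥ 1, R = ℤ/p^kℤ, and let b, b' ∈ R^n each have at least one unit coordinate, with λ, λ' ∈ R. If the hyperplanes H_{b,λ} and H_{b',λ'} are equal as subsets of R^n, then there exists a unit c ∈ R with b' = c·b and λ' = c·λ. -/
private lemma sum_single_mul {n : ℕ} {R : Type*} [CommRing R]
    (b : Fin n → R) (j : Fin n) (x : R) :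
    ∑ t, (Pi.single j x : Fin n → R) t * b t = x * b j := by
  simp [Pi.single_apply, ite_mul, Finset.sum_ite_eq']

theorem stmt12 (p k n : ℕ) [hp : Fact p.Prime] (hk : 1 ≤ k) (hn : 1 ≤ n)
    (b b' : Fin n → ZMod (p ^ k)) (hb : ∃ i, IsUnit (b i)) (hb' : ∃ i, IsUnit (b' i))
    (l l' : ZMod (p ^ k))
    (h : ∀ v : Fin n → ZMod (p ^ k), (∑ i, v i * b i = l) ↔ (∑ i, v i * b' i = l')) :
    ∃ c : (ZMod (p ^ k))ˣ, b' = (c : ZMod (p ^ k)) • b ∧ l' = (c : ZMod (p ^ k)) * l := by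
  obtain ⟨i, hi⟩ := hb
  obtain ⟨u, hu⟩ := hi
  have huu : (↑u⁻¹ : ZMod (p ^ k)) * ↑u = 1 := u.inv_mul
  set c : ZMod (p ^ k) := ↑u⁻¹ * b' i with hc
  have h1 : l * ↑u⁻¹ * b' i = l' := by
    have := (h (Pi.single i (l * ↑u⁻¹))).mp (by
      rw [sum_single_mul, ← hu]
      linear_combination l * huu)
    rwa [sum_single_mul] at this
  have hl' : l' = c * l := by rw [← h1, hc]; ring
  have hbj : ∀ j, b' j = c * b j := by
    intro j
    by_cases hji : j = i
    · subst hji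
      rw [hc, ← hu]
      linear_combination (-(b' j)) * huu
    · have key := (h (Pi.single i (l * ↑u⁻¹) + Pi.single j 1 - Pi.single i (b j * ↑u⁻¹))).mp (by
        simp only [Pi.sub_apply, Pi.add_apply, sub_mul, add_mul, Finset.sum_sub_distrib,
          Finset.sum_add_distrib, sum_single_mul]
        rw [← hu]
        linear_combination (l - b j) * huu)
      simp only [Pi.sub_apply, Pi.add_apply, sub_mul, add_mul, Finset.sum_sub_distrib,
        Finset.sum_add_distrib, sum_single_mul] at key
      have : b' j = b j * ↑u⁻¹ * b' i := by linear_combination key - h1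
      rw [this, hc]; ring
  obtain ⟨j, hj⟩ := hb'
  rw [hbj j] at hj
  have hcu : IsUnit c := isUnit_of_mul_isUnit_left hj
  refine ⟨hcu.unit, ?_, ?_⟩
  · funext t; simp [hbj t, hcu.unit_spec]
  · rw [hcu.unit_spec]; exact hl'
end
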